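/- arXiv:1707.06213 — 3 statements merged into one kernel-verified Lean document; each statement's English description precedes it below -/
import Mathlib

section
/- Let d ≥ 1, p ≥ 1, a, b > 0, α ≥ b, and let η : [0,∞) → [0,∞) be nonincreasing with η(t) ≥ a for all t ∈ [0,b]. Let Ω ⊆ ℝ^d be a Borel set and μ a probability measure on Ω whose density ρ with respect to Lebesgue measure satisfies ρ ≥ ρ_min > 0 a.e. on Ω. Let n ≥ 1, x : Fin n → ℝ^d, ε > 0, and let T : Ω → ℝ^d be Borel measurable with pushforward μ ∘ T⁻¹ equal to the empirical measure μ_n and with ‖T(w) − w‖ ≤ bε/8 for μ-a.e. w. Let k, m ∈ Fin n be such that ‖x k − x m‖ ≤ αε and assume that every point y of the line segment joining x k and x m satisfies both B̄(y, bε/2) ⊆ Ω and ‖x j − y‖ ≤ bε/8 for some j ∈ Fin n. Then there is a constant C > 0 depending only on p, d, a, b and ρ_min such that for every f : Fin n → ℝ, |f k − f m|^p ≤ C · α^p · ε^p · n · E_n(f). -/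
/-!
Walk from `x k` to `x m` along the segment in `N ≤ 4α/b + 1` steps of length at most `bε/4`.
For each step point `y` the ball `B̄(y, bε/4) ⊆ Ω` has `μ`-mass at least
`ρmin (bε/4)^d |B̄(0,1)|`, and `T` moves it into `B̄(y, 3bε/8)`, so this cluster holds at least a
fixed multiple of `ε^d n` sample points. Points of consecutive clusters (and `x k`, `x m` with the
first and last cluster) are within `bε` of each other, hence joined by edges of weight at least
`a`. By Jensen, the `p`-th power of the difference of two consecutive cluster averages of `f` is
at most the energy sum divided by `a` times the product of the cluster sizes; summing the
`N + 2` steps with Hölder costs the factor `(N + 2)^p ≤ (7α/b)^p`.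
-/

open MeasureTheory Metric Set
open scoped ENNReal BigOperators

/-- The graph `p`-Dirichlet energy
`E_n(f) = (1/(ε^{p+d} n²)) Σ_{i,j} η(‖x i − x j‖/ε) |f i − f j|^p`. -/
noncomputable def graphEnergy (d n : ℕ) (x : Fin n → EuclideanSpace ℝ (Fin d))
    (ε : ℝ) (η : ℝ → ℝ) (p : ℝ) (f : Fin n → ℝ) : ℝ :=
  (1 / (ε ^ (p + (d : ℝ)) * (n : ℝ) ^ 2)) *
    ∑ i, ∑ j, η (‖x i - x j‖ / ε) * |f i - f j| ^ p

/-- The empirical measure `μ_n = (1/n) Σ_i δ_{x i}`. -/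
noncomputable def empiricalMeasure (d n : ℕ) (x : Fin n → EuclideanSpace ℝ (Fin d)) :
    Measure (EuclideanSpace ℝ (Fin d)) :=
  ((n : ℝ≥0∞))⁻¹ • ∑ i, Measure.dirac (x i)

open scoped Finset

namespace Finset

variable {ι : Type*} {p : ℝ}

lemma rpow_expect_le_expect_rpow (s : Finset ι) {z : ι → ℝ} (hz : ∀ i ∈ s, 0 ≤ z i)
    (hp : 1 ≤ p) : (𝔼 i ∈ s, z i) ^ p ≤ 𝔼 i ∈ s, z i ^ p := by
  rcases s.eq_empty_or_nonempty with rfl | hs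
  · simp [Real.zero_rpow (by linarith : p ≠ 0)]
  have hw : ∑ _i ∈ s, (#s : ℝ)⁻¹ = 1 := by
    rw [sum_const, nsmul_eq_mul, mul_inv_cancel₀ (by exact_mod_cast hs.card_ne_zero)]
  simpa only [expect_eq_sum_div_card, sum_div, inv_mul_eq_div] using
    Real.rpow_arith_mean_le_arith_mean_rpow s _ z (fun _ _ => by positivity) hw hz hp

lemma abs_expect_sub_expect_rpow_le {s u : Finset ι} (hs : s.Nonempty) (hu : u.Nonempty)
    (f : ι → ℝ) (hp : 1 ≤ p) :
    |𝔼 i ∈ s, f i - 𝔼 j ∈ u, f j| ^ p ≤ 𝔼 q ∈ s ×ˢ u, |f q.1 - f q.2| ^ p := by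
  have hdiff : 𝔼 i ∈ s, f i - 𝔼 j ∈ u, f j = 𝔼 q ∈ s ×ˢ u, (f q.1 - f q.2) := by
    rw [expect_product' s u fun i j => f i - f j]
    simp only [expect_sub_distrib, expect_const hs, expect_const hu]
  calc |𝔼 i ∈ s, f i - 𝔼 j ∈ u, f j| ^ p
      ≤ (𝔼 q ∈ s ×ˢ u, |f q.1 - f q.2|) ^ p := by
        rw [hdiff]
        exact Real.rpow_le_rpow (abs_nonneg _) (abs_expect_le _ _) (by linarith)
    _ ≤ 𝔼 q ∈ s ×ˢ u, |f q.1 - f q.2| ^ p :=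
        rpow_expect_le_expect_rpow _ (fun _ _ => abs_nonneg _) hp

lemma abs_sub_rpow_le_of_forall_abs_sub_rpow_le (g : ℕ → ℝ) (N : ℕ) {B : ℝ} (hp : 1 ≤ p)
    (hstep : ∀ t < N, |g t - g (t + 1)| ^ p ≤ B) : |g 0 - g N| ^ p ≤ (N : ℝ) ^ p * B := by
  have hp0 : 0 < p := by linarith
  rcases N.eq_zero_or_pos with rfl | hN
  · simp [Real.zero_rpow hp0.ne']
  have hNR : (0 : ℝ) < N := by exact_mod_cast hN
  calc |g 0 - g N| ^ p
      ≤ (∑ t ∈ range N, |g t - g (t + 1)|) ^ p := by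
        refine Real.rpow_le_rpow (abs_nonneg _) ?_ hp0.le
        rw [← sum_range_sub' g N]
        exact abs_sum_le_sum_abs _ _
    _ ≤ (N : ℝ) ^ (p - 1) * ∑ t ∈ range N, |g t - g (t + 1)| ^ p := by
        simpa using Real.rpow_sum_le_const_mul_sum_rpow_of_nonneg (s := range N) hp
          (fun t _ => abs_nonneg (g t - g (t + 1)))
    _ ≤ (N : ℝ) ^ (p - 1) * (N * B) := by
        gcongr
        simpa using sum_le_sum fun t ht => hstep t (mem_range.mp ht)
    _ = (N : ℝ) ^ p * B := by
        rw [← mul_assoc, ← Real.rpow_add_one hNR.ne', sub_add_cancel]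

variable [Fintype ι] (w : ι → ι → ℝ) (f : ι → ℝ)

lemma sum_sum_mul_abs_sub_rpow_nonneg (hw : ∀ i j, 0 ≤ w i j) :
    0 ≤ ∑ i, ∑ j, w i j * |f i - f j| ^ p :=
  sum_nonneg fun i _ => sum_nonneg fun j _ => mul_nonneg (hw i j) (by positivity)

lemma sum_abs_sub_rpow_le_of_le_weight (hw : ∀ i j, 0 ≤ w i j) {a : ℝ} (ha : 0 < a)
    (P : Finset (ι × ι)) (hP : ∀ q ∈ P, a ≤ w q.1 q.2) :
    ∑ q ∈ P, |f q.1 - f q.2| ^ p ≤ (∑ i, ∑ j, w i j * |f i - f j| ^ p) / a := by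
  rw [le_div_iff₀' ha, mul_sum, ← Fintype.sum_prod_type']
  calc ∑ q ∈ P, a * |f q.1 - f q.2| ^ p
      ≤ ∑ q ∈ P, w q.1 q.2 * |f q.1 - f q.2| ^ p := by
        gcongr with q hq
        exact hP q hq
    _ ≤ ∑ q : ι × ι, w q.1 q.2 * |f q.1 - f q.2| ^ p :=
        sum_le_univ_sum_of_nonneg fun q => by have := hw q.1 q.2; positivity

lemma abs_expect_sub_expect_rpow_le_of_chain (hw : ∀ i j, 0 ≤ w i j) (hp : 1 ≤ p) {a M : ℝ}
    (ha : 0 < a) (hM : 0 < M) (G : ℕ → Finset ι) (N : ℕ)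
    (hedge : ∀ t < N, ∀ i ∈ G t, ∀ j ∈ G (t + 1), a ≤ w i j)
    (hcard : ∀ t < N, M ≤ #(G t) * #(G (t + 1))) :
    |𝔼 i ∈ G 0, f i - 𝔼 i ∈ G N, f i| ^ p ≤
      (N : ℝ) ^ p / (a * M) * ∑ i, ∑ j, w i j * |f i - f j| ^ p := by
  rw [div_mul_eq_mul_div, mul_div_assoc]
  refine abs_sub_rpow_le_of_forall_abs_sub_rpow_le (fun t => 𝔼 i ∈ G t, f i) N hp
    fun t ht => ?_
  have hprod : 0 < #(G t) * #(G (t + 1)) := by exact_mod_cast hM.trans_le (hcard t ht)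
  have hne : (G t).Nonempty ∧ (G (t + 1)).Nonempty := by
    simpa only [CanonicallyOrderedAdd.mul_pos, card_pos] using hprod
  calc |𝔼 i ∈ G t, f i - 𝔼 i ∈ G (t + 1), f i| ^ p
      ≤ 𝔼 q ∈ G t ×ˢ G (t + 1), |f q.1 - f q.2| ^ p :=
        abs_expect_sub_expect_rpow_le hne.1 hne.2 f hp
    _ ≤ (∑ i, ∑ j, w i j * |f i - f j| ^ p) / a / M := by
        rw [expect_eq_sum_div_card, card_product, Nat.cast_mul]
        exact div_le_div₀ (div_nonneg (sum_sum_mul_abs_sub_rpow_nonneg w f hw) ha.le) (sum_abs_sub_rpow_le_of_le_weight w f hw ha _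
          fun q hq => hedge t ht q.1 (mem_product.mp hq).1 q.2 (mem_product.mp hq).2)
          hM (hcard t ht)
    _ = (∑ i, ∑ j, w i j * |f i - f j| ^ p) / (a * M) := div_div _ _ _

lemma abs_sub_rpow_le_of_cluster_chain (hw : ∀ i j, 0 ≤ w i j) (hp : 1 ≤ p) {a M : ℝ}
    (ha : 0 < a) (hM : 0 < M) {k m : ι} (A : ℕ → Finset ι) (N : ℕ)
    (hcard : ∀ t ≤ N, M ≤ #(A t)) (hfirst : ∀ j ∈ A 0, a ≤ w k j)
    (hstep : ∀ t < N, ∀ i ∈ A t, ∀ j ∈ A (t + 1), a ≤ w i j) (hlast : ∀ i ∈ A N, a ≤ w i m) :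
    |f k - f m| ^ p ≤ ((N : ℝ) + 2) ^ p / (a * M) * ∑ i, ∑ j, w i j * |f i - f j| ^ p := by
  let G : ℕ → Finset ι := fun t => if t = 0 then {k} else if t = N + 2 then {m} else A (t - 1)
  have hG : ∀ t ≤ N, G (t + 1) = A t := fun t ht => by simp [G, show t ≠ N + 1 by omega]
  have hA : ∀ t ≤ N, (1 : ℝ) ≤ #(A t) := fun t ht =>
    Nat.one_le_cast.mpr (Nat.cast_pos.mp (hM.trans_le (hcard t ht)))
  have hchain := abs_expect_sub_expect_rpow_le_of_chain w f hw hp ha hM G (N + 2) ?_ ?_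
  · simpa [G] using hchain
  · rintro (_ | t) ht
    · simpa [G, hG 0 (Nat.zero_le N)] using hfirst
    · rw [hG t (by omega)]
      rcases (Nat.lt_succ_iff.mp (Nat.succ_lt_succ_iff.mp ht)).lt_or_eq with htN | rfl
      · rw [hG (t + 1) htN]
        exact hstep t htN
      · simpa [G] using hlast
  · rintro (_ | t) ht
    · simpa [G, hG 0 (Nat.zero_le N)] using hcard 0 (Nat.zero_le N)
    · rw [hG t (by omega)]
      rcases (Nat.lt_succ_iff.mp (Nat.succ_lt_succ_iff.mp ht)).lt_or_eq with htN | rfl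
      · rw [hG (t + 1) htN]
        exact (hcard t htN.le).trans (le_mul_of_one_le_right (Nat.cast_nonneg _) (hA _ htN))
      · simpa [G] using hcard t le_rfl

end Finset

lemma exists_seq_mem_segment_dist_succ_le {E : Type*} [NormedAddCommGroup E] [NormedSpace ℝ E]
    (u v : E) {δ : ℝ} (hδ : 0 < δ) :
    ∃ N : ℕ, (N : ℝ) < dist u v / δ + 1 ∧ ∃ y : ℕ → E, y 0 = u ∧ y N = v ∧
      (∀ t ≤ N, y t ∈ segment ℝ u v) ∧ ∀ t, dist (y t) (y (t + 1)) ≤ δ := by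
  set N := ⌈dist u v / δ⌉₊
  have hN : dist u v ≤ N * δ := (div_le_iff₀ hδ).mp (Nat.le_ceil _)
  refine ⟨N, Nat.ceil_lt_add_one (by positivity), fun t => AffineMap.lineMap u v ((t : ℝ) / N),
    by simp, ?_, fun t ht => ?_, fun t => ?_⟩
  · rcases eq_or_ne N 0 with hN0 | hN0
    · simp [hN0, dist_le_zero.mp (by simpa [hN0] using hN)]
    · simp [hN0]
  · rw [segment_eq_image_lineMap]
    exact ⟨_, ⟨by positivity, div_le_one_of_le₀ (by exact_mod_cast ht) (Nat.cast_nonneg _)⟩, rfl⟩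
  · rcases eq_or_ne N 0 with hN0 | hN0
    · simp [hN0, hδ.le]
    have hNR : (0 : ℝ) < N := by exact_mod_cast Nat.pos_of_ne_zero hN0
    rw [dist_lineMap_lineMap, Real.dist_eq, ← sub_div, Nat.cast_succ, sub_add_cancel_left,
      abs_div, abs_neg, abs_one, abs_of_pos hNR, one_div_mul_eq_div, div_le_iff₀ hNR, mul_comm]
    exact hN

lemma abs_sub_rpow_le_of_le_card_along_segment {E ι : Type*} [NormedAddCommGroup E]
    [NormedSpace ℝ E] [Fintype ι] (x : ι → E) (w : ι → ι → ℝ) (f : ι → ℝ)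
    (hw : ∀ i j, 0 ≤ w i j) {p a M δ R : ℝ} (hp : 1 ≤ p) (ha : 0 < a) (hM : 0 < M) (hδ : 0 < δ)
    (hweight : ∀ i j, dist (x i) (x j) ≤ 2 * R + δ → a ≤ w i j) (k m : ι)
    (hcard : ∀ y ∈ segment ℝ (x k) (x m), M ≤ #{i | dist (x i) y ≤ R}) :
    |f k - f m| ^ p ≤
      (dist (x k) (x m) / δ + 3) ^ p / (a * M) * ∑ i, ∑ j, w i j * |f i - f j| ^ p := by
  obtain ⟨N, hNlt, y, hy0, hyN, hyseg, hystep⟩ := exists_seq_mem_segment_dist_succ_le (x k) (x m) hδ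
  let A : ℕ → Finset ι := fun t => {i | dist (x i) (y t) ≤ R}
  have hA : ∀ t, ∀ i ∈ A t, dist (x i) (y t) ≤ R := fun t i hi => (Finset.mem_filter.mp hi).2
  have hchain := Finset.abs_sub_rpow_le_of_cluster_chain w f hw hp ha hM A N
    (fun t ht => hcard _ (hyseg t ht))
    (fun j hj => hweight k j (by
      linarith [dist_comm (x j) (x k), hy0 ▸ hA 0 j hj, dist_nonneg (x := x j) (y := x k)]))
    (fun t _ i hi j hj => hweight i j (by
      linarith [dist_triangle4 (x i) (y t) (y (t + 1)) (x j), hA t i hi, hA (t + 1) j hj,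
        hystep t, dist_comm (x j) (y (t + 1))]))
    (fun i hi => hweight i m (by linarith [hyN ▸ hA N i hi, dist_nonneg (x := x i) (y := x m)]))
  refine hchain.trans ?_
  gcongr ?_ ^ p / _ * _
  · exact Finset.sum_sum_mul_abs_sub_rpow_nonneg w f hw
  · linarith

lemma ofReal_mul_le_withDensity_apply {X : Type*} [MeasurableSpace X] {ν : Measure X}
    {Ω s : Set X} {ρ : X → ℝ} {c : ℝ} (hρ : ∀ᵐ w ∂ν.restrict Ω, c ≤ ρ w)
    (hs : MeasurableSet s) (hsΩ : s ⊆ Ω) :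
    ENNReal.ofReal c * ν s ≤ (ν.restrict Ω).withDensity (fun w => ENNReal.ofReal (ρ w)) s := by
  rw [withDensity_apply _ hs, ← inter_eq_self_of_subset_left hsΩ, ← Measure.restrict_apply hs,
    inter_eq_self_of_subset_left hsΩ, ← setLIntegral_const]
  exact lintegral_mono_ae (ae_restrict_of_ae (hρ.mono fun w hw => ENNReal.ofReal_le_ofReal hw))

lemma measure_closedBall_le_map_closedBall {E : Type*} [NormedAddCommGroup E] [MeasurableSpace E]
    [OpensMeasurableSpace E] {μ : Measure E} {T : E → E} (hT : Measurable T) {r : ℝ}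
    (hTr : ∀ᵐ w ∂μ, ‖T w - w‖ ≤ r) (y : E) (R : ℝ) :
    μ (closedBall y R) ≤ μ.map T (closedBall y (R + r)) := by
  rw [Measure.map_apply hT measurableSet_closedBall]
  refine measure_mono_ae ?_
  filter_upwards [hTr] with w hw (hwy : dist w y ≤ R)
  show dist (T w) y ≤ R + r
  rw [← dist_eq_norm] at hw
  linarith [dist_triangle (T w) w y]

lemma empiricalMeasure_closedBall {d n : ℕ} (x : Fin n → EuclideanSpace ℝ (Fin d))
    (y : EuclideanSpace ℝ (Fin d)) (R : ℝ) :
    empiricalMeasure d n x (closedBall y R) = (n : ℝ≥0∞)⁻¹ * #{i | dist (x i) y ≤ R} := by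
  simp [empiricalMeasure, Measure.dirac_apply' _ measurableSet_closedBall, indicator,
    Finset.sum_boole]

lemma mul_le_card_filter_dist_le {d n : ℕ} (hn : n ≠ 0) {Ω : Set (EuclideanSpace ℝ (Fin d))}
    {ρ : EuclideanSpace ℝ (Fin d) → ℝ} {ρmin : ℝ} (hρmin : 0 ≤ ρmin)
    (hρ : ∀ᵐ w ∂(volume.restrict Ω), ρmin ≤ ρ w) {x : Fin n → EuclideanSpace ℝ (Fin d)}
    {T : EuclideanSpace ℝ (Fin d) → EuclideanSpace ℝ (Fin d)} (hT : Measurable T)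
    (hmap : ((volume.restrict Ω).withDensity fun w => ENNReal.ofReal (ρ w)).map T =
      empiricalMeasure d n x) {r : ℝ}
    (hTr : ∀ᵐ w ∂(volume.restrict Ω).withDensity fun w => ENNReal.ofReal (ρ w), ‖T w - w‖ ≤ r)
    {y : EuclideanSpace ℝ (Fin d)} {R : ℝ} (hR : 0 ≤ R) (hball : closedBall y R ⊆ Ω) :
    ρmin * R ^ d * volume.real (closedBall (0 : EuclideanSpace ℝ (Fin d)) 1) * n ≤
      #{i | dist (x i) y ≤ R + r} := by
  have hnR : (0 : ℝ) < n := by exact_mod_cast Nat.pos_of_ne_zero hn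
  rw [← le_div_iff₀ hnR, ← ENNReal.ofReal_le_ofReal_iff (by positivity)]
  calc _ = ENNReal.ofReal ρmin * volume (closedBall y R) := by
        rw [Measure.addHaar_closedBall' volume y hR, finrank_euclideanSpace_fin,
          ENNReal.ofReal_mul (by positivity), ENNReal.ofReal_mul hρmin, measureReal_def,
          ENNReal.ofReal_toReal measure_closedBall_lt_top.ne, mul_assoc]
    _ ≤ ((volume.restrict Ω).withDensity fun w => ENNReal.ofReal (ρ w)) (closedBall y R) :=
        ofReal_mul_le_withDensity_apply hρ measurableSet_closedBall hball
    _ ≤ empiricalMeasure d n x (closedBall y (R + r)) :=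
        hmap ▸ measure_closedBall_le_map_closedBall hT hTr y R
    _ = _ := by
        rw [empiricalMeasure_closedBall, ENNReal.ofReal_div_of_pos hnR, ENNReal.ofReal_natCast,
          ENNReal.ofReal_natCast, ENNReal.div_eq_inv_mul]

theorem stmt1_general (d : ℕ) (p a b ρmin : ℝ)
    (hp : 1 ≤ p) (ha : 0 < a) (hb : 0 < b) (hρmin : 0 < ρmin) :
    ∃ C : ℝ, 0 < C ∧
      ∀ (α : ℝ), b ≤ α →
      ∀ (η : ℝ → ℝ), (∀ t, 0 ≤ t → 0 ≤ η t) → AntitoneOn η (Set.Ici 0) →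
        (∀ t ∈ Set.Icc (0 : ℝ) b, a ≤ η t) →
      ∀ (Ω : Set (EuclideanSpace ℝ (Fin d))), MeasurableSet Ω →
      ∀ (ρ : EuclideanSpace ℝ (Fin d) → ℝ) (μ : Measure (EuclideanSpace ℝ (Fin d))),
        μ = (volume.restrict Ω).withDensity (fun w => ENNReal.ofReal (ρ w)) →
        IsProbabilityMeasure μ →
        (∀ᵐ w ∂(volume.restrict Ω), ρmin ≤ ρ w) →
      ∀ (n : ℕ), 1 ≤ n →
      ∀ (x : Fin n → EuclideanSpace ℝ (Fin d)) (ε : ℝ), 0 < ε →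
      ∀ (T : EuclideanSpace ℝ (Fin d) → EuclideanSpace ℝ (Fin d)), Measurable T →
        μ.map T = empiricalMeasure d n x →
        (∀ᵐ w ∂μ, ‖T w - w‖ ≤ b * ε / 8) →
      ∀ (k m : Fin n), ‖x k - x m‖ ≤ α * ε →
        (∀ y ∈ segment ℝ (x k) (x m),
          closedBall y (b * ε / 2) ⊆ Ω ∧ ∃ j : Fin n, ‖x j - y‖ ≤ b * ε / 8) →
      ∀ f : Fin n → ℝ,
        |f k - f m| ^ p ≤ C * α ^ p * ε ^ p * n * graphEnergy d n x ε η p f := by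
  have hV : 0 < volume.real (closedBall (0 : EuclideanSpace ℝ (Fin d)) 1) :=
    ENNReal.toReal_pos (measure_closedBall_pos volume _ one_pos).ne' measure_closedBall_lt_top.ne
  refine ⟨(7 / b) ^ p / (a * (ρmin * (b / 4) ^ d *
    volume.real (closedBall (0 : EuclideanSpace ℝ (Fin d)) 1))), by positivity, ?_⟩
  intro α hα η hη0 _ hηa Ω _ ρ μ hμ _ hρ n hn x ε hε T hT hmap hTr k m hkm hseg f
  subst hμ
  have hbε : 0 < b * ε := mul_pos hb hε
  have hchain := abs_sub_rpow_le_of_le_card_along_segment x (fun i j => η (‖x i - x j‖ / ε)) f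
    (fun i j => hη0 _ (by positivity)) (R := b * ε / 4 + b * ε / 8) hp ha (by positivity)
    (by positivity : 0 < b * ε / 4)
    (fun i j hij => hηa _ ⟨by positivity, by rw [div_le_iff₀ hε, ← dist_eq_norm]; linarith⟩) k m
    fun y hy => mul_le_card_filter_dist_le (by omega) hρmin.le hρ hT hmap hTr (by positivity)
      ((closedBall_subset_closedBall (by linarith)).trans (hseg y hy).1)
  have hlen : dist (x k) (x m) / (b * ε / 4) + 3 ≤ 7 / b * α := by
    rw [dist_eq_norm, div_add' _ _ _ (by positivity), div_le_iff₀ (by positivity)]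
    have : 3 * (b * ε) ≤ 3 * (α * ε) := by gcongr
    field_simp
    linarith
  set V := volume.real (closedBall (0 : EuclideanSpace ℝ (Fin d)) 1)
  set S := ∑ i, ∑ j, η (‖x i - x j‖ / ε) * |f i - f j| ^ p with hS
  calc |f k - f m| ^ p ≤ _ := hchain
    _ ≤ (7 / b * α) ^ p / (a * (ρmin * (b * ε / 4) ^ d * V * n)) * S := by
        gcongr ?_ ^ p / _ * _
        exact Finset.sum_sum_mul_abs_sub_rpow_nonneg _ f fun i j => hη0 _ (by positivity)
    _ = (7 / b) ^ p / (a * (ρmin * (b / 4) ^ d * V)) * α ^ p * ε ^ p * n *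
          graphEnergy d n x ε η p f := by
        rw [graphEnergy, ← hS, Real.mul_rpow (by positivity) (by linarith), Real.rpow_add hε,
          Real.rpow_natCast, show b * ε / 4 = b / 4 * ε by ring, mul_pow]
        field_simp

theorem stmt1 (d : ℕ) (hd : 1 ≤ d) (p a b ρmin : ℝ)
    (hp : 1 ≤ p) (ha : 0 < a) (hb : 0 < b) (hρmin : 0 < ρmin) :
    ∃ C : ℝ, 0 < C ∧
      ∀ (α : ℝ), b ≤ α →
      ∀ (η : ℝ → ℝ), (∀ t, 0 ≤ t → 0 ≤ η t) → AntitoneOn η (Set.Ici 0) →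
        (∀ t ∈ Set.Icc (0 : ℝ) b, a ≤ η t) →
      ∀ (Ω : Set (EuclideanSpace ℝ (Fin d))), MeasurableSet Ω →
      ∀ (ρ : EuclideanSpace ℝ (Fin d) → ℝ) (μ : Measure (EuclideanSpace ℝ (Fin d))),
        μ = (volume.restrict Ω).withDensity (fun w => ENNReal.ofReal (ρ w)) →
        IsProbabilityMeasure μ →
        (∀ᵐ w ∂(volume.restrict Ω), ρmin ≤ ρ w) →
      ∀ (n : ℕ), 1 ≤ n →
      ∀ (x : Fin n → EuclideanSpace ℝ (Fin d)) (ε : ℝ), 0 < ε →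
      ∀ (T : EuclideanSpace ℝ (Fin d) → EuclideanSpace ℝ (Fin d)), Measurable T →
        μ.map T = empiricalMeasure d n x →
        (∀ᵐ w ∂μ, ‖T w - w‖ ≤ b * ε / 8) →
      ∀ (k m : Fin n), ‖x k - x m‖ ≤ α * ε →
        (∀ y ∈ segment ℝ (x k) (x m),
          closedBall y (b * ε / 2) ⊆ Ω ∧ ∃ j : Fin n, ‖x j - y‖ ≤ b * ε / 8) →
      ∀ f : Fin n → ℝ,
        |f k - f m| ^ p ≤ C * α ^ p * ε ^ p * n * graphEnergy d n x ε η p f :=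
  stmt1_general d p a b ρmin hp ha hb hρmin
end

section
/- Let d ≥ 1, p ≥ 1, a, b > 0, ε > 0, and let η : [0,∞) → [0,∞) satisfy η(t) ≥ a for all t ∈ [0,b]. Then for any n ≥ 1, any points x : Fin n → ℝ^d, any f : Fin n → ℝ and any k ∈ Fin n, (osc_{bε/2}(f)(k))^p · #{j ∈ Fin n : ‖x j − x k‖ ≤ bε/2} ≤ (2^{p+1}/a) · ε^{p+d} · n² · E_n(f). -/
open MeasureTheory Metric Set
open scoped ENNReal BigOperators

/-- The oscillation of `f` at the vertex `k` over radius `r`: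
`osc_r(f)(k) = max{f j : ‖x j − x k‖ ≤ r} − min{f j : ‖x j − x k‖ ≤ r}`. -/
noncomputable def oscAt (d n : ℕ) (x : Fin n → EuclideanSpace ℝ (Fin d))
    (f : Fin n → ℝ) (r : ℝ) (k : Fin n) : ℝ :=
  sSup (f '' {j | ‖x j - x k‖ ≤ r}) - sInf (f '' {j | ‖x j - x k‖ ≤ r})

/-!
Let `i₁, i₂` be the points of the ball `B = B(x k, bε/2)` where `f` attains its maximum and its
minimum over `B`. Any two points of `B` are within `bε` of each other, so `η ≥ a` on all pairs
from `B`. For every `j ∈ B`, `|f i₁ - f i₂|^p ≤ 2^p (|f i₁ - f j|^p + |f i₂ - f j|^p)`; summing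
over `j ∈ B` bounds `osc^p · #B` by `2^p / a` times two row sums of the energy, each at most the
full double sum.
-/

open Finset

namespace Real

theorem add_rpow_le_two_rpow_mul_rpow_add_rpow {u v p : ℝ} (hu : 0 ≤ u) (hv : 0 ≤ v)
    (hp : 0 ≤ p) : (u + v) ^ p ≤ 2 ^ p * (u ^ p + v ^ p) :=
  calc (u + v) ^ p ≤ (2 * max u v) ^ p := by
        gcongr; linarith [le_max_left u v, le_max_right u v]
    _ = 2 ^ p * max u v ^ p := mul_rpow zero_le_two (hu.trans (le_max_left u v))
    _ ≤ 2 ^ p * (u ^ p + v ^ p) := by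
        gcongr
        rcases max_choice u v with h | h <;> rw [h]
        · exact le_add_of_nonneg_right (rpow_nonneg hv p)
        · exact le_add_of_nonneg_left (rpow_nonneg hu p)

theorem abs_sub_rpow_le_two_rpow_mul {y z w p : ℝ} (hp : 0 ≤ p) :
    |y - z| ^ p ≤ 2 ^ p * (|y - w| ^ p + |z - w| ^ p) :=
  calc |y - z| ^ p ≤ (|y - w| + |z - w|) ^ p := by
        gcongr; simpa only [abs_sub_comm w z] using abs_sub_le y w z
    _ ≤ 2 ^ p * (|y - w| ^ p + |z - w| ^ p) :=
        add_rpow_le_two_rpow_mul_rpow_add_rpow (abs_nonneg _) (abs_nonneg _) hp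

end Real

section WeightedEnergy

variable {ι : Type*} [Fintype ι] (w : ι → ι → ℝ) (f : ι → ℝ) (p : ℝ)

theorem mul_sum_rpow_abs_sub_le_sum_sum (hw : ∀ i j, 0 ≤ w i j) {s : Finset ι} {a : ℝ}
    (hws : ∀ i ∈ s, ∀ j ∈ s, a ≤ w i j) {i₀ : ι} (hi₀ : i₀ ∈ s) :
    a * ∑ j ∈ s, |f i₀ - f j| ^ p ≤ ∑ i, ∑ j, w i j * |f i - f j| ^ p := by
  have hterm : ∀ i j, 0 ≤ w i j * |f i - f j| ^ p := fun i j =>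
    mul_nonneg (hw i j) (Real.rpow_nonneg (abs_nonneg _) p)
  calc a * ∑ j ∈ s, |f i₀ - f j| ^ p
      ≤ ∑ j ∈ s, w i₀ j * |f i₀ - f j| ^ p := by
        rw [mul_sum]
        exact sum_le_sum fun j hj =>
          mul_le_mul_of_nonneg_right (hws i₀ hi₀ j hj) (Real.rpow_nonneg (abs_nonneg _) p)
    _ ≤ ∑ j, w i₀ j * |f i₀ - f j| ^ p :=
        sum_le_sum_of_subset_of_nonneg (subset_univ s) fun j _ _ => hterm i₀ j
    _ ≤ ∑ i, ∑ j, w i j * |f i - f j| ^ p :=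
        single_le_sum (f := fun i => ∑ j, w i j * |f i - f j| ^ p)
          (fun i _ => sum_nonneg fun j _ => hterm i j) (mem_univ i₀)

theorem rpow_abs_sub_mul_card_le (hp : 0 ≤ p) (hw : ∀ i j, 0 ≤ w i j) {s : Finset ι} {a : ℝ}
    (ha : 0 < a) (hws : ∀ i ∈ s, ∀ j ∈ s, a ≤ w i j) {i₁ i₂ : ι} (hi₁ : i₁ ∈ s)
    (hi₂ : i₂ ∈ s) :
    |f i₁ - f i₂| ^ p * #s ≤ 2 ^ (p + 1) / a * ∑ i, ∑ j, w i j * |f i - f j| ^ p := by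
  set T := ∑ i, ∑ j, w i j * |f i - f j| ^ p
  have hrow : ∀ i ∈ s, ∑ j ∈ s, |f i - f j| ^ p ≤ T / a := fun i hi => by
    rw [le_div_iff₀ ha, mul_comm]
    exact mul_sum_rpow_abs_sub_le_sum_sum w f p hw hws hi
  calc |f i₁ - f i₂| ^ p * #s
      = ∑ _j ∈ s, |f i₁ - f i₂| ^ p := by rw [sum_const, nsmul_eq_mul, mul_comm]
    _ ≤ ∑ j ∈ s, 2 ^ p * (|f i₁ - f j| ^ p + |f i₂ - f j| ^ p) :=
        sum_le_sum fun j _ => Real.abs_sub_rpow_le_two_rpow_mul hp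
    _ = 2 ^ p * (∑ j ∈ s, |f i₁ - f j| ^ p + ∑ j ∈ s, |f i₂ - f j| ^ p) := by
        rw [← mul_sum, sum_add_distrib]
    _ ≤ 2 ^ p * (T / a + T / a) := by gcongr <;> exact hrow _ ‹_›
    _ = 2 ^ (p + 1) / a * T := by rw [Real.rpow_add_one two_ne_zero]; ring

end WeightedEnergy

theorem exists_oscAt_eq_abs_sub (d n : ℕ) (x : Fin n → EuclideanSpace ℝ (Fin d))
    (f : Fin n → ℝ) {r : ℝ} (hr : 0 ≤ r) (k : Fin n) :
    ∃ i₁ ∈ {j | ‖x j - x k‖ ≤ r}, ∃ i₂ ∈ {j | ‖x j - x k‖ ≤ r},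
      oscAt d n x f r k = |f i₁ - f i₂| := by
  set S := {j | ‖x j - x k‖ ≤ r}
  have hfin : (f '' S).Finite := S.toFinite.image f
  have hne : (f '' S).Nonempty := ⟨f k, k, by simpa [S] using hr, rfl⟩
  obtain ⟨i₁, hi₁, hmax⟩ := hne.csSup_mem hfin
  obtain ⟨i₂, hi₂, hmin⟩ := hne.csInf_mem hfin
  have hle : sInf (f '' S) ≤ sSup (f '' S) := csInf_le_csSup hne hfin.bddBelow hfin.bddAbove
  refine ⟨i₁, hi₁, i₂, hi₂, ?_⟩
  rw [oscAt, hmax, hmin, abs_of_nonneg (sub_nonneg.mpr hle)]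

theorem rpow_mul_sq_mul_graphEnergy (d n : ℕ) (x : Fin n → EuclideanSpace ℝ (Fin d)) {ε : ℝ}
    (hε : 0 < ε) (hn : 0 < n) (η : ℝ → ℝ) (p : ℝ) (f : Fin n → ℝ) :
    ε ^ (p + (d : ℝ)) * (n : ℝ) ^ 2 * graphEnergy d n x ε η p f =
      ∑ i, ∑ j, η (‖x i - x j‖ / ε) * |f i - f j| ^ p := by
  have : ε ^ (p + (d : ℝ)) * (n : ℝ) ^ 2 ≠ 0 := by positivity
  rw [graphEnergy, ← mul_assoc, mul_one_div_cancel this, one_mul]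

theorem stmt2_general (d n : ℕ)
    (p a b ε : ℝ) (hp : 1 ≤ p) (ha : 0 < a) (hb : 0 < b) (hε : 0 < ε)
    (η : ℝ → ℝ) (hηnonneg : ∀ t, 0 ≤ t → 0 ≤ η t)
    (hηa : ∀ t ∈ Set.Icc (0 : ℝ) b, a ≤ η t)
    (x : Fin n → EuclideanSpace ℝ (Fin d))
    (f : Fin n → ℝ) (k : Fin n) :
    oscAt d n x f (b * ε / 2) k ^ p *
        (({j : Fin n | ‖x j - x k‖ ≤ b * ε / 2}).ncard : ℝ) ≤
      (2 ^ (p + 1) / a) * ε ^ (p + (d : ℝ)) * (n : ℝ) ^ 2 * graphEnergy d n x ε η p f := by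
  classical
  set S := {j : Fin n | ‖x j - x k‖ ≤ b * ε / 2}
  obtain ⟨i₁, hi₁, i₂, hi₂, hosc⟩ :=
    exists_oscAt_eq_abs_sub d n x f (by positivity : 0 ≤ b * ε / 2) k
  have hη_ball : ∀ i ∈ S.toFinset, ∀ j ∈ S.toFinset, a ≤ η (‖x i - x j‖ / ε) := by
    intro i hi j hj
    simp only [S, Set.mem_toFinset, Set.mem_ofPred_eq] at hi hj
    refine hηa _ ⟨by positivity, (div_le_iff₀ hε).mpr ?_⟩
    linarith [norm_sub_le_norm_sub_add_norm_sub (x i) (x k) (x j), norm_sub_rev (x k) (x j)]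
  rw [hosc, Set.ncard_eq_toFinset_card', mul_assoc (2 ^ (p + 1) / a), mul_assoc (2 ^ (p + 1) / a),
    rpow_mul_sq_mul_graphEnergy d n x hε k.pos η p f]
  exact rpow_abs_sub_mul_card_le _ f p (by linarith) (fun i j => hηnonneg _ (by positivity)) ha
    hη_ball (Set.mem_toFinset.mpr hi₁) (Set.mem_toFinset.mpr hi₂)

theorem stmt2 (d n : ℕ) (hd : 1 ≤ d) (hn : 1 ≤ n)
    (p a b ε : ℝ) (hp : 1 ≤ p) (ha : 0 < a) (hb : 0 < b) (hε : 0 < ε)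
    (η : ℝ → ℝ) (hηnonneg : ∀ t, 0 ≤ t → 0 ≤ η t)
    (hηa : ∀ t ∈ Set.Icc (0 : ℝ) b, a ≤ η t)
    (x : Fin n → EuclideanSpace ℝ (Fin d))
    (f : Fin n → ℝ) (k : Fin n) :
    oscAt d n x f (b * ε / 2) k ^ p *
        (({j : Fin n | ‖x j - x k‖ ≤ b * ε / 2}).ncard : ℝ) ≤
      (2 ^ (p + 1) / a) * ε ^ (p + (d : ℝ)) * (n : ℝ) ^ 2 * graphEnergy d n x ε η p f :=
  stmt2_general d n p a b ε hp ha hb hε η hηnonneg hηa x f k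
end

section
/- Let d ≥ 1, p ≥ 1, and let η : [0,∞) → [0,∞) be nonincreasing and measurable; define η̃(t) = η(0) for t ∈ [0,1] and η̃(t) = η(t) for t > 1, and assume γ̃ := ∫_{ℝ^d} η̃(‖w‖) dw < ∞. Let Ω ⊆ ℝ^d be a Borel set, μ a probability measure on Ω with density ρ ≤ ρ_max with respect to Lebesgue measure, n ≥ 1, x : Fin n → ℝ^d with empirical measure μ_n, ε > 0, and let T : Ω → ℝ^d be Borel measurable with pushforward μ ∘ T⁻¹ = μ_n and ‖T(w) − w‖ ≤ ε for μ-a.e. w. Let S ⊆ Fin n have N elements, let M > 0, and let y : S → ℝ satisfy |y i| ≤ M for all i ∈ S. Then inf{ E_n(f) : f : Fin n → ℝ, |f i| ≤ M for all i, and f i = y i for all i ∈ S } ≤ inf{ E_n(f) : f : Fin n → ℝ, |f i| ≤ M for all i } + 2^{p+d+1} · M^p · N · ρ_max · γ̃ / (ε^p n). In particular, if ε = ε_n with ε_n^p n → ∞ as n → ∞, the gap between the constrained and unconstrained infima over the sup-norm M-ball tends to 0. -/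
open MeasureTheory Metric Set
open scoped ENNReal BigOperators

/-! Overwrite any competitor `f` of the unconstrained problem by `y` on `S`. Only the pairs
`(i, j)` with `i ∈ S` or `j ∈ S` change, each by at most `η(‖x i - x j‖/ε) (2M)^p`, so the energy
grows by at most `2 (2M)^p #S` times the largest row sum `∑ j, η(‖x i - x j‖/ε)`. That row sum
is `n` times the integral of `η(‖x i - ·‖/ε)` against `μ_n = T_♯ μ`. Since `T` moves points by
at most `ε` and `η` is nonincreasing, `η(‖x i - T w‖/ε) ≤ η̃(‖x i - w‖/(2ε))`, and the integral
of the latter against `μ ≤ ρ_max · Lebesgue` is at most `ρ_max (2ε)^d γ̃`. -/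

open scoped Finset

noncomputable def flattenedKernel (η : ℝ → ℝ) (t : ℝ) : ℝ := if t ≤ 1 then η 0 else η t

theorem flattenedKernel_nonneg {η : ℝ → ℝ} (hη : ∀ t, 0 ≤ t → 0 ≤ η t) {t : ℝ} (ht : 0 ≤ t) :
    0 ≤ flattenedKernel η t := by
  unfold flattenedKernel
  split_ifs
  exacts [hη 0 le_rfl, hη t ht]

theorem le_flattenedKernel_of_le_add {η : ℝ → ℝ} (hη : AntitoneOn η (Ici 0)) {u v ε : ℝ}
    (hu : 0 ≤ u) (hε : 0 < ε) (huv : v ≤ u + ε) :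
    η (u / ε) ≤ flattenedKernel η (v / (2 * ε)) := by
  unfold flattenedKernel
  split_ifs with hv
  · exact hη self_mem_Ici (mem_Ici.2 (by positivity)) (by positivity)
  · -- once `v > 2ε`, the shift by at most `ε` loses at most half of `v`
    have h2ε : 2 * ε < v := (one_lt_div (by positivity)).1 (not_le.1 hv)
    refine hη (mem_Ici.2 (div_nonneg (by linarith) (by linarith))) (mem_Ici.2 (by positivity)) ?_
    rw [div_le_div_iff₀ (by positivity) hε]
    nlinarith

theorem csInf_le_csInf_add {A B : Set ℝ} (hA : BddBelow A) (hB : B.Nonempty) {K : ℝ}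
    (h : ∀ b ∈ B, ∃ a ∈ A, a ≤ b + K) : sInf A ≤ sInf B + K := by
  have : sInf A - K ≤ sInf B := le_csInf hB fun b hb => by
    obtain ⟨a, ha, hab⟩ := h b hb
    linarith [csInf_le hA ha]
  linarith

theorem abs_piecewise_le {ι : Type*} (S : Finset ι) [DecidablePred (· ∈ S)] {f y : ι → ℝ}
    {M : ℝ} (hf : ∀ i, |f i| ≤ M) (hy : ∀ i ∈ S, |y i| ≤ M) (i : ι) :
    |S.piecewise y f i| ≤ M := by
  by_cases hi : i ∈ S
  · simpa [hi] using hy i hi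
  · simpa [hi] using hf i

theorem sum_sum_mul_le_of_eq_off {ι : Type*} [Fintype ι] [DecidableEq ι] (S : Finset ι)
    {W F G : ι → ι → ℝ} {R C : ℝ} (hW : ∀ i j, 0 ≤ W i j) (hF : ∀ i j, 0 ≤ F i j)
    (hC : 0 ≤ C) (hGC : ∀ i j, G i j ≤ C) (hGF : ∀ i ∉ S, ∀ j ∉ S, G i j = F i j)
    (hrow : ∀ i, ∑ j, W i j ≤ R) (hcol : ∀ j, ∑ i, W i j ≤ R) :
    ∑ i, ∑ j, W i j * G i j ≤ ∑ i, ∑ j, W i j * F i j + 2 * (#S * (R * C)) := by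
  have hterm : ∀ i j, W i j * G i j ≤ W i j * F i j +
      ((if i ∈ S then W i j * C else 0) + (if j ∈ S then W i j * C else 0)) := by
    intro i j
    have hWG : W i j * G i j ≤ W i j * C := mul_le_mul_of_nonneg_left (hGC i j) (hW i j)
    have hWF := mul_nonneg (hW i j) (hF i j)
    have hWC := mul_nonneg (hW i j) hC
    by_cases hi : i ∈ S
    · split_ifs <;> linarith
    by_cases hj : j ∈ S
    · simp only [hi, hj, if_true, if_false]; linarith
    · simp [hi, hj, hGF i hi j hj]
  have hrows : ∀ V : ι → ι → ℝ, (∀ i, ∑ j, V i j ≤ R) →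
      ∑ i, ∑ j, (if i ∈ S then V i j * C else 0) ≤ #S * (R * C) := by
    intro V hV
    calc ∑ i, ∑ j, (if i ∈ S then V i j * C else 0)
        = ∑ i ∈ S, (∑ j, V i j) * C := by
          simp_rw [Finset.sum_ite_irrel, Finset.sum_const_zero, Finset.sum_mul,
            Finset.sum_ite_mem, Finset.univ_inter]
      _ ≤ ∑ _i ∈ S, R * C := Finset.sum_le_sum fun i _ => mul_le_mul_of_nonneg_right (hV i) hC
      _ = #S * (R * C) := by rw [Finset.sum_const, nsmul_eq_mul]
  have hcols := hrows (fun i j => W j i) hcol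
  rw [Finset.sum_comm] at hcols
  calc ∑ i, ∑ j, W i j * G i j
      ≤ ∑ i, ∑ j, (W i j * F i j +
          ((if i ∈ S then W i j * C else 0) + (if j ∈ S then W i j * C else 0))) :=
        Finset.sum_le_sum fun i _ => Finset.sum_le_sum fun j _ => hterm i j
    _ ≤ ∑ i, ∑ j, W i j * F i j + 2 * (#S * (R * C)) := by
        simp only [Finset.sum_add_distrib]
        linarith [hrows W hrow]

theorem norm_sub_div_eq_norm_inv_smul {E : Type*} [SeminormedAddCommGroup E] [NormedSpace ℝ E]
    (a w : E) {r : ℝ} (hr : 0 < r) : ‖a - w‖ / r = ‖r⁻¹ • (w - a)‖ := by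
  rw [norm_smul, norm_inv, Real.norm_of_nonneg hr.le, norm_sub_rev, inv_mul_eq_div]

section Scaling

variable {E : Type*} [NormedAddCommGroup E] [NormedSpace ℝ E] [FiniteDimensional ℝ E]
  [MeasurableSpace E] [BorelSpace E] (μ : Measure E) [μ.IsAddHaarMeasure]

theorem MeasureTheory.Integrable.comp_norm_sub_div {g : ℝ → ℝ}
    (hg : Integrable (fun w => g ‖w‖) μ) (a : E) {r : ℝ} (hr : 0 < r) :
    Integrable (fun w => g (‖a - w‖ / r)) μ := by
  simp_rw [norm_sub_div_eq_norm_inv_smul a _ hr]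
  exact (hg.comp_smul (inv_ne_zero hr.ne')).comp_sub_right a

theorem integral_comp_norm_sub_div (g : ℝ → ℝ) (a : E) {r : ℝ} (hr : 0 < r) :
    ∫ w, g (‖a - w‖ / r) ∂μ = r ^ Module.finrank ℝ E * ∫ w, g ‖w‖ ∂μ := by
  simp_rw [norm_sub_div_eq_norm_inv_smul a _ hr]
  rw [integral_sub_right_eq_self (fun w => g ‖r⁻¹ • w‖) a,
    Measure.integral_comp_inv_smul_of_nonneg μ (fun w => g ‖w‖) hr.le, smul_eq_mul]

end Scaling

theorem withDensity_ofReal_le_smul {α : Type*} [MeasurableSpace α] {ν : Measure α}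
    {ρ : α → ℝ} {c : ℝ} (hρ : ∀ᵐ w ∂ν, ρ w ≤ c) :
    ν.withDensity (fun w => ENNReal.ofReal (ρ w)) ≤ ENNReal.ofReal c • ν := by
  rw [← withDensity_const]
  exact withDensity_mono (hρ.mono fun w hw => ENNReal.ofReal_le_ofReal hw)

theorem nonneg_of_le_ofReal_smul {α : Type*} [MeasurableSpace α] {μ ν : Measure α} [NeZero μ]
    {c : ℝ} (h : μ ≤ ENNReal.ofReal c • ν) : 0 ≤ c := by
  by_contra hc
  rw [ENNReal.ofReal_of_nonpos (not_le.1 hc).le, zero_smul, Measure.nonpos_iff_eq_zero'] at h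
  exact NeZero.ne μ h

theorem lintegral_empiricalMeasure {d n : ℕ} (x : Fin n → EuclideanSpace ℝ (Fin d))
    (g : EuclideanSpace ℝ (Fin d) → ℝ≥0∞) :
    ∫⁻ v, g v ∂empiricalMeasure d n x = (n : ℝ≥0∞)⁻¹ * ∑ i, g (x i) := by
  simp only [empiricalMeasure, lintegral_smul_measure, lintegral_finsetSum_measure,
    lintegral_dirac, smul_eq_mul]

theorem sum_kernel_le {d n : ℕ} {η : ℝ → ℝ} (hη : ∀ t, 0 ≤ t → 0 ≤ η t)
    (hη_anti : AntitoneOn η (Ici 0))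
    (hint : Integrable (fun w : EuclideanSpace ℝ (Fin d) => flattenedKernel η ‖w‖))
    {μ : Measure (EuclideanSpace ℝ (Fin d))} {ρmax : ℝ} (hρmax : 0 ≤ ρmax)
    (hμ : μ ≤ ENNReal.ofReal ρmax • volume) {x : Fin n → EuclideanSpace ℝ (Fin d)} {ε : ℝ}
    (hε : 0 < ε) {T : EuclideanSpace ℝ (Fin d) → EuclideanSpace ℝ (Fin d)}
    (hpush : μ.map T = empiricalMeasure d n x) (hclose : ∀ᵐ w ∂μ, ‖T w - w‖ ≤ ε) (i : Fin n) :
    ∑ j, η (‖x i - x j‖ / ε) ≤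
      n * (ρmax * ((2 * ε) ^ d * ∫ w : EuclideanSpace ℝ (Fin d), flattenedKernel η ‖w‖)) := by
  set γ := ∫ w : EuclideanSpace ℝ (Fin d), flattenedKernel η ‖w‖
  have hγ : 0 ≤ γ := integral_nonneg fun w => flattenedKernel_nonneg hη (norm_nonneg w)
  have key : (n : ℝ≥0∞)⁻¹ * ∑ j, ENNReal.ofReal (η (‖x i - x j‖ / ε)) ≤
      ENNReal.ofReal (ρmax * ((2 * ε) ^ d * γ)) :=
    calc (n : ℝ≥0∞)⁻¹ * ∑ j, ENNReal.ofReal (η (‖x i - x j‖ / ε))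
        = ∫⁻ v, ENNReal.ofReal (η (‖x i - v‖ / ε)) ∂μ.map T := by
          rw [hpush, lintegral_empiricalMeasure]
      _ ≤ ∫⁻ w, ENNReal.ofReal (η (‖x i - T w‖ / ε)) ∂μ := lintegral_map_le _ _
      _ ≤ ∫⁻ w, ENNReal.ofReal (flattenedKernel η (‖x i - w‖ / (2 * ε))) ∂μ := by
          refine lintegral_mono_ae (hclose.mono fun w hw => ENNReal.ofReal_le_ofReal ?_)
          refine le_flattenedKernel_of_le_add hη_anti (norm_nonneg _) hε ?_
          linarith [norm_sub_le_norm_sub_add_norm_sub (x i) (T w) w]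
      _ ≤ ∫⁻ w, ENNReal.ofReal (flattenedKernel η (‖x i - w‖ / (2 * ε)))
            ∂(ENNReal.ofReal ρmax • volume) := lintegral_mono' hμ le_rfl
      _ = ENNReal.ofReal (ρmax * ((2 * ε) ^ d * γ)) := by
          rw [lintegral_smul_measure, smul_eq_mul, ← ofReal_integral_eq_lintegral_ofReal
            (hint.comp_norm_sub_div volume (x i) (by positivity))
            (ae_of_all _ fun w => flattenedKernel_nonneg hη (by positivity)),
            integral_comp_norm_sub_div volume _ _ (by positivity), finrank_euclideanSpace_fin,
            ← ENNReal.ofReal_mul hρmax]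
  have hn : (n : ℝ≥0∞) ≠ 0 := by exact_mod_cast i.pos.ne'
  rwa [ENNReal.inv_mul_le_iff hn (ENNReal.natCast_ne_top n),
    ← ENNReal.ofReal_sum_of_nonneg fun j _ => hη _ (by positivity), ← ENNReal.ofReal_natCast,
    ← ENNReal.ofReal_mul (Nat.cast_nonneg _), ENNReal.ofReal_le_ofReal_iff (by positivity)] at key

theorem graphEnergy_nonneg {d n : ℕ} (x : Fin n → EuclideanSpace ℝ (Fin d)) {ε : ℝ}
    (hε : 0 ≤ ε) {η : ℝ → ℝ} (hη : ∀ t, 0 ≤ t → 0 ≤ η t) (p : ℝ) (f : Fin n → ℝ) :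
    0 ≤ graphEnergy d n x ε η p f := by
  unfold graphEnergy
  have : 0 ≤ ε ^ (p + (d : ℝ)) := Real.rpow_nonneg hε _
  have hsum : 0 ≤ ∑ i, ∑ j, η (‖x i - x j‖ / ε) * |f i - f j| ^ p :=
    Finset.sum_nonneg fun i _ => Finset.sum_nonneg fun j _ =>
      mul_nonneg (hη _ (by positivity)) (Real.rpow_nonneg (abs_nonneg _) _)
  positivity

theorem graphEnergy_piecewise_le {d n : ℕ} {x : Fin n → EuclideanSpace ℝ (Fin d)} {ε : ℝ}
    (hε : 0 < ε) {η : ℝ → ℝ} (hη : ∀ t, 0 ≤ t → 0 ≤ η t) {p M R : ℝ} (hp : 0 ≤ p)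
    (hM : 0 ≤ M) (S : Finset (Fin n)) {f y : Fin n → ℝ} (hf : ∀ i, |f i| ≤ M)
    (hy : ∀ i ∈ S, |y i| ≤ M) (hrow : ∀ i, ∑ j, η (‖x i - x j‖ / ε) ≤ n * R) :
    graphEnergy d n x ε η p (S.piecewise y f) ≤
      graphEnergy d n x ε η p f + 2 * (2 * M) ^ p * #S * R / (ε ^ (p + d) * n) := by
  set g := S.piecewise y f
  have hg : ∀ i, |g i| ≤ M := abs_piecewise_le S hf hy
  have hsum := sum_sum_mul_le_of_eq_off S (W := fun i j => η (‖x i - x j‖ / ε))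
    (F := fun i j => |f i - f j| ^ p) (G := fun i j => |g i - g j| ^ p) (C := (2 * M) ^ p)
    (fun i j => hη _ (by positivity)) (fun i j => Real.rpow_nonneg (abs_nonneg _) _)
    (Real.rpow_nonneg (by positivity) _)
    (fun i j => Real.rpow_le_rpow (abs_nonneg _)
      ((abs_sub _ _).trans (by linarith [hg i, hg j])) hp)
    (fun i hi j hj => by simp [g, hi, hj]) hrow
    (fun j => by simpa only [norm_sub_rev] using hrow j)
  have hc : 0 ≤ 1 / (ε ^ (p + (d : ℝ)) * (n : ℝ) ^ 2) := by
    have := Real.rpow_pos_of_pos hε (p + d)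
    positivity
  calc graphEnergy d n x ε η p g
      ≤ 1 / (ε ^ (p + (d : ℝ)) * (n : ℝ) ^ 2) * (∑ i, ∑ j, η (‖x i - x j‖ / ε) * |f i - f j| ^ p
          + 2 * (#S * (n * R * (2 * M) ^ p))) := mul_le_mul_of_nonneg_left hsum hc
    _ = graphEnergy d n x ε η p f + 2 * (2 * M) ^ p * #S * R / (ε ^ (p + d) * n) := by
      rw [graphEnergy, mul_add]
      congr 1
      rcases eq_or_ne (n : ℝ) 0 with hn | hn
      · simp [hn]
      · field_simp

theorem stmt10_general (d n N : ℕ)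
    (p : ℝ) (hp : 1 ≤ p)
    (η : ℝ → ℝ) (hηnonneg : ∀ t, 0 ≤ t → 0 ≤ η t)
    (hηmono : AntitoneOn η (Set.Ici 0))
    (ηt : ℝ → ℝ) (hηt : ηt = fun t => if t ≤ 1 then η 0 else η t)
    (γ : ℝ) (hγint : Integrable (fun w : EuclideanSpace ℝ (Fin d) => ηt ‖w‖))
    (hγ : γ = ∫ w : EuclideanSpace ℝ (Fin d), ηt ‖w‖)
    (Ω : Set (EuclideanSpace ℝ (Fin d)))
    (ρ : EuclideanSpace ℝ (Fin d) → ℝ) (ρmax : ℝ)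
    (μ : Measure (EuclideanSpace ℝ (Fin d)))
    (hμ : μ = (volume.restrict Ω).withDensity (fun w => ENNReal.ofReal (ρ w)))
    (hprob : IsProbabilityMeasure μ)
    (hρmax : ∀ᵐ w ∂(volume.restrict Ω), ρ w ≤ ρmax)
    (x : Fin n → EuclideanSpace ℝ (Fin d)) (ε : ℝ) (hε : 0 < ε)
    (T : EuclideanSpace ℝ (Fin d) → EuclideanSpace ℝ (Fin d))
    (hpush : μ.map T = empiricalMeasure d n x)
    (hclose : ∀ᵐ w ∂μ, ‖T w - w‖ ≤ ε)
    (S : Finset (Fin n)) (hS : S.card = N)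
    (M : ℝ) (hM : 0 < M) (y : Fin n → ℝ) (hy : ∀ i ∈ S, |y i| ≤ M) :
    sInf {e : ℝ | ∃ f : Fin n → ℝ, (∀ i, |f i| ≤ M) ∧ (∀ i ∈ S, f i = y i) ∧
        e = graphEnergy d n x ε η p f} ≤
      sInf {e : ℝ | ∃ f : Fin n → ℝ, (∀ i, |f i| ≤ M) ∧ e = graphEnergy d n x ε η p f} +
        2 ^ (p + (d : ℝ) + 1) * M ^ p * N * ρmax * γ / (ε ^ p * n) := by
  obtain rfl : ηt = flattenedKernel η := hηt
  subst hγ hS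
  have hdens : μ ≤ ENNReal.ofReal ρmax • volume.restrict Ω :=
    hμ ▸ withDensity_ofReal_le_smul hρmax
  have hρ0 : 0 ≤ ρmax := nonneg_of_le_ofReal_smul hdens
  have hrow := sum_kernel_le hηnonneg hηmono hγint hρ0
    (hdens.trans (by gcongr; exact Measure.restrict_le_self)) hε hpush hclose
  have hconst : 2 * (2 * M) ^ p * #S *
      (ρmax * ((2 * ε) ^ d * ∫ w : EuclideanSpace ℝ (Fin d), flattenedKernel η ‖w‖)) /
        (ε ^ (p + d) * n) = 2 ^ (p + (d : ℝ) + 1) * M ^ p * #S * ρmax *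
          (∫ w : EuclideanSpace ℝ (Fin d), flattenedKernel η ‖w‖) / (ε ^ p * n) := by
    rw [Real.mul_rpow zero_le_two hM.le, Real.rpow_add hε, Real.rpow_add two_pos,
      Real.rpow_add two_pos, Real.rpow_natCast, Real.rpow_natCast, Real.rpow_one, mul_pow]
    have : ε ^ d ≠ 0 := by positivity
    field_simp
  refine csInf_le_csInf_add ⟨0, ?_⟩ ?_ ?_
  · rintro _ ⟨f, -, -, rfl⟩
    exact graphEnergy_nonneg x hε.le hηnonneg p f
  · exact ⟨_, 0, fun _ => by simpa using hM.le, rfl⟩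
  · rintro _ ⟨f, hf, rfl⟩
    refine ⟨_, ⟨S.piecewise y f, abs_piecewise_le S hf hy,
      fun i hi => S.piecewise_eq_of_mem _ _ hi, rfl⟩, ?_⟩
    rw [← hconst]
    exact graphEnergy_piecewise_le hε hηnonneg (by linarith) hM.le S hf hy hrow

theorem stmt10 (d n N : ℕ) (hd : 1 ≤ d) (hn : 1 ≤ n)
    (p : ℝ) (hp : 1 ≤ p)
    (η : ℝ → ℝ) (hη : Measurable η) (hηnonneg : ∀ t, 0 ≤ t → 0 ≤ η t)
    (hηmono : AntitoneOn η (Set.Ici 0))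
    (ηt : ℝ → ℝ) (hηt : ηt = fun t => if t ≤ 1 then η 0 else η t)
    (γ : ℝ) (hγint : Integrable (fun w : EuclideanSpace ℝ (Fin d) => ηt ‖w‖))
    (hγ : γ = ∫ w : EuclideanSpace ℝ (Fin d), ηt ‖w‖)
    (Ω : Set (EuclideanSpace ℝ (Fin d))) (hΩ : MeasurableSet Ω)
    (ρ : EuclideanSpace ℝ (Fin d) → ℝ) (ρmax : ℝ)
    (μ : Measure (EuclideanSpace ℝ (Fin d)))
    (hμ : μ = (volume.restrict Ω).withDensity (fun w => ENNReal.ofReal (ρ w)))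
    (hprob : IsProbabilityMeasure μ)
    (hρmax : ∀ᵐ w ∂(volume.restrict Ω), ρ w ≤ ρmax)
    (x : Fin n → EuclideanSpace ℝ (Fin d)) (ε : ℝ) (hε : 0 < ε)
    (T : EuclideanSpace ℝ (Fin d) → EuclideanSpace ℝ (Fin d)) (hT : Measurable T)
    (hpush : μ.map T = empiricalMeasure d n x)
    (hclose : ∀ᵐ w ∂μ, ‖T w - w‖ ≤ ε)
    (S : Finset (Fin n)) (hS : S.card = N)
    (M : ℝ) (hM : 0 < M) (y : Fin n → ℝ) (hy : ∀ i ∈ S, |y i| ≤ M) :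
    sInf {e : ℝ | ∃ f : Fin n → ℝ, (∀ i, |f i| ≤ M) ∧ (∀ i ∈ S, f i = y i) ∧
        e = graphEnergy d n x ε η p f} ≤
      sInf {e : ℝ | ∃ f : Fin n → ℝ, (∀ i, |f i| ≤ M) ∧ e = graphEnergy d n x ε η p f} +
        2 ^ (p + (d : ℝ) + 1) * M ^ p * N * ρmax * γ / (ε ^ p * n) :=
  stmt10_general d n N p hp η hηnonneg hηmono ηt hηt γ hγint hγ Ω ρ ρmax μ hμ hprob hρmax x ε hε T
    hpush hclose S hS M hM y hy
end
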